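/- arXiv:2310.06824 — 2 statements merged into one kernel-verified Lean document; each statement's English description precedes it below -/
import Mathlib

section
/- Let X ~ N(θ, I_d) and X' ~ N(-θ, I_d) with θ ≠ 0, and define the population logistic loss L(φ) = (1/2) E[log σ(φᵀX)] + (1/2) E[log(1 - σ(φᵀX'))] over unit vectors φ ∈ ℝ^d. Then L is maximized at φ = θ/‖θ‖. -/
open MeasureTheory Matrix

/-- The logistic sigmoid `σ(t) = 1/(1+e^{-t})`. -/
noncomputable def logistic (t : ℝ) : ℝ := (1 + Real.exp (-t))⁻¹

/-- Density of the multivariate Gaussian `N(μ, Σ)` on `ℝ^d`. -/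
noncomputable def gaussDensity {d : ℕ} (μ : Fin d → ℝ) (S : Matrix (Fin d) (Fin d) ℝ)
    (x : Fin d → ℝ) : ℝ :=
  (Real.sqrt ((2 * Real.pi) ^ d * S.det))⁻¹ *
    Real.exp (-(1/2) * ((x - μ) ⬝ᵥ (S⁻¹ *ᵥ (x - μ))))

/-!
Translating by the mean and using `1 - σ(t) = σ(-t)` together with the symmetry `x ↦ -x` of the
standard Gaussian, both halves of `L φ` become the same integral, so that `L φ` is a positive
multiple of `𝔼[log σ(⟪φ, Z⟫ + ⟪φ, θ⟫)]` with `Z` standard Gaussian. By rotation invariance of `Z`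
this depends on a unit vector `φ` only through `⟪φ, θ⟫`, and it increases with `⟪φ, θ⟫` because
`log σ` does; by Cauchy–Schwarz `⟪φ, θ⟫ ≤ ‖θ‖`, with equality at `φ = θ / ‖θ‖`.
-/

open Real Metric WithLp
open scoped RealInnerProductSpace

lemma log_logistic (t : ℝ) : log (logistic t) = -log (1 + exp (-t)) := by
  rw [logistic, log_inv]

lemma one_sub_logistic (t : ℝ) : 1 - logistic t = logistic (-t) := by
  have h : 1 + exp t ≠ 0 := by positivity
  rw [logistic, logistic, neg_neg, exp_neg]
  field_simp
  ring

lemma continuous_logistic : Continuous logistic :=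
  (continuous_const.add (continuous_exp.comp continuous_neg)).inv₀ fun t =>
    (by positivity : 0 < 1 + exp (-t)).ne'

lemma monotone_log_logistic : Monotone fun t => log (logistic t) := by
  intro s t hst
  simp only [log_logistic, neg_le_neg_iff]
  gcongr

lemma abs_log_logistic_le (t : ℝ) : |log (logistic t)| ≤ exp (-t) := by
  have hpos : 0 < 1 + exp (-t) := by positivity
  rw [log_logistic, abs_neg, abs_of_nonneg (log_nonneg (by linarith [exp_pos (-t)]))]
  linarith [log_le_sub_one_of_pos hpos]

section InnerProductSpace

variable {E : Type*} [NormedAddCommGroup E] [InnerProductSpace ℝ E] [FiniteDimensional ℝ E]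
  [MeasurableSpace E] [BorelSpace E]

theorem integral_comp_inner_norm_eq_of_norm_eq (F : ℝ → ℝ → ℝ) {ψ ψ' : E}
    (h : ‖ψ‖ = ‖ψ'‖) : ∫ x, F ⟪ψ, x⟫ ‖x‖ = ∫ x, F ⟪ψ', x⟫ ‖x‖ := by
  set R := (ℝ ∙ (ψ - ψ'))ᗮ.reflection
  have hR : R ψ = ψ' := Submodule.reflection_sub h
  rw [← R.measurePreserving.integral_comp R.toHomeomorph.measurableEmbedding
    (fun x => F ⟪ψ', x⟫ ‖x‖)]
  congr 1 with x
  rw [← hR, R.inner_map_map, R.norm_map]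

theorem integrable_exp_neg_half_norm_sq_add_inner (w : E) :
    Integrable fun x : E => exp (-(1/2) * ‖x‖ ^ 2 + ⟪w, x⟫) := by
  convert (GaussianFourier.integrable_cexp_neg_mul_sq_norm_add (V := E) (b := 1/2)
    (by norm_num) 1 w).norm using 2 with x
  simp [Complex.norm_exp, ← Complex.ofReal_pow]

/-- Up to normalization, `𝔼[log σ(⟪ψ, X⟫ + a)]` for `X` standard Gaussian on `E`. -/
noncomputable def gaussianLogLik (ψ : E) (a : ℝ) : ℝ :=
  ∫ x, log (logistic (⟪ψ, x⟫ + a)) * exp (-(1/2) * ‖x‖ ^ 2)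

theorem gaussianLogLik_congr_norm {ψ ψ' : E} (h : ‖ψ‖ = ‖ψ'‖) (a : ℝ) :
    gaussianLogLik ψ a = gaussianLogLik ψ' a :=
  integral_comp_inner_norm_eq_of_norm_eq
    (fun s r => log (logistic (s + a)) * exp (-(1/2) * r ^ 2)) h

theorem integral_log_one_sub_logistic_inner_sub_mul_gaussian (ψ : E) (a : ℝ) :
    ∫ x, log (1 - logistic (⟪ψ, x⟫ - a)) * exp (-(1/2) * ‖x‖ ^ 2) = gaussianLogLik ψ a := by
  rw [← gaussianLogLik_congr_norm (norm_neg ψ)]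
  simp_rw [gaussianLogLik, one_sub_logistic, neg_sub, inner_neg_left, sub_eq_neg_add]

theorem integrable_log_logistic_inner_add_mul_gaussian (ψ : E) (a : ℝ) :
    Integrable fun x => log (logistic (⟪ψ, x⟫ + a)) * exp (-(1/2) * ‖x‖ ^ 2) := by
  refine ((integrable_exp_neg_half_norm_sq_add_inner (-ψ)).const_mul (exp (-a))).mono'
    ?_ (.of_forall fun x => ?_)
  · have := continuous_logistic.measurable
    exact Measurable.aestronglyMeasurable (by fun_prop)
  calc ‖log (logistic (⟪ψ, x⟫ + a)) * exp (-(1/2) * ‖x‖ ^ 2)‖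
      = |log (logistic (⟪ψ, x⟫ + a))| * exp (-(1/2) * ‖x‖ ^ 2) := by
        rw [norm_mul, Real.norm_eq_abs, Real.norm_of_nonneg (exp_pos _).le]
    _ ≤ exp (-(⟪ψ, x⟫ + a)) * exp (-(1/2) * ‖x‖ ^ 2) := by
        gcongr; exact abs_log_logistic_le _
    _ = exp (-a) * exp (-(1/2) * ‖x‖ ^ 2 + ⟪-ψ, x⟫) := by
        rw [← exp_add, ← exp_add, inner_neg_left]; ring_nf

theorem monotone_gaussianLogLik (ψ : E) : Monotone (gaussianLogLik ψ) := fun a b hab =>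
  integral_mono (integrable_log_logistic_inner_add_mul_gaussian ψ a)
    (integrable_log_logistic_inner_add_mul_gaussian ψ b) fun _ =>
      mul_le_mul_of_nonneg_right (monotone_log_logistic (by linarith)) (exp_pos _).le

theorem isMaxOn_gaussianLogLik_inner {θ : E} (hθ : θ ≠ 0) :
    IsMaxOn (fun ψ => gaussianLogLik ψ ⟪ψ, θ⟫) (sphere 0 1) (‖θ‖⁻¹ • θ) := by
  intro ψ hψ
  rw [mem_sphere_zero_iff_norm] at hψ
  have hθ' : 0 < ‖θ‖ := norm_pos_iff.2 hθ
  have hunit : ‖‖θ‖⁻¹ • θ‖ = 1 := by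
    rw [norm_smul, norm_inv, norm_norm, inv_mul_cancel₀ hθ'.ne']
  have hinner : ⟪‖θ‖⁻¹ • θ, θ⟫ = ‖θ‖ := by
    rw [real_inner_smul_left, real_inner_self_eq_norm_sq, sq, inv_mul_cancel_left₀ hθ'.ne']
  calc gaussianLogLik ψ ⟪ψ, θ⟫
      = gaussianLogLik (‖θ‖⁻¹ • θ) ⟪ψ, θ⟫ := gaussianLogLik_congr_norm (hψ.trans hunit.symm) _
    _ ≤ gaussianLogLik (‖θ‖⁻¹ • θ) ⟪‖θ‖⁻¹ • θ, θ⟫ := by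
        refine monotone_gaussianLogLik _ ?_
        rw [hinner]
        simpa [hψ] using real_inner_le_norm ψ θ

end InnerProductSpace

lemma inner_toLp_toLp_eq_dotProduct {ι : Type*} [Fintype ι] (x y : ι → ℝ) :
    ⟪toLp 2 x, toLp 2 y⟫ = x ⬝ᵥ y := by
  rw [EuclideanSpace.inner_toLp_toLp, star_trivial, dotProduct_comm]

lemma norm_toLp_eq_sqrt_dotProduct {ι : Type*} [Fintype ι] (x : ι → ℝ) :
    ‖toLp 2 x‖ = √(x ⬝ᵥ x) := by
  rw [norm_eq_sqrt_real_inner, inner_toLp_toLp_eq_dotProduct]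

lemma gaussDensity_one_apply {d : ℕ} (μ x : Fin d → ℝ) :
    gaussDensity μ 1 x = (√((2 * π) ^ d))⁻¹ * exp (-(1/2) * ‖toLp 2 (x - μ)‖ ^ 2) := by
  rw [gaussDensity, det_one, mul_one, inv_one, one_mulVec, ← real_inner_self_eq_norm_sq,
    inner_toLp_toLp_eq_dotProduct]

theorem integral_mul_gaussDensity_one {d : ℕ} (F : ℝ → ℝ) (ψ μ : Fin d → ℝ) :
    ∫ x, F (ψ ⬝ᵥ x) * gaussDensity μ 1 x = (√((2 * π) ^ d))⁻¹ *
      ∫ x : EuclideanSpace ℝ (Fin d), F (⟪toLp 2 ψ, x⟫ + ψ ⬝ᵥ μ) * exp (-(1/2) * ‖x‖ ^ 2) := by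
  rw [← (EuclideanSpace.volume_preserving_symm_measurableEquiv_toLp (Fin d)).integral_comp',
    ← integral_add_right_eq_self _ (toLp 2 μ), ← integral_const_mul]
  congr 1 with x
  have hx : (MeasurableEquiv.toLp 2 (Fin d → ℝ)).symm (x + toLp 2 μ) = ofLp x + μ := rfl
  rw [hx, gaussDensity_one_apply, add_sub_cancel_right, toLp_ofLp, dotProduct_add,
    ← inner_toLp_toLp_eq_dotProduct ψ (ofLp x), toLp_ofLp]
  ring

/-- Isotropic case: for `X ~ N(θ, I)` and `X' ~ N(-θ, I)` with `θ ≠ 0`, the population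
logistic log-likelihood over unit vectors is maximized at `θ/‖θ‖`. -/
theorem logistic_regression_direction_isotropic {d : ℕ} (θ : Fin d → ℝ) (hθ : θ ≠ 0)
    (L : (Fin d → ℝ) → ℝ)
    (hL : ∀ φ, L φ =
      (1/2) * (∫ x : Fin d → ℝ, Real.log (logistic (φ ⬝ᵥ x)) * gaussDensity θ 1 x)
      + (1/2) * (∫ x : Fin d → ℝ, Real.log (1 - logistic (φ ⬝ᵥ x)) * gaussDensity (-θ) 1 x)) :
    IsMaxOn L {φ | φ ⬝ᵥ φ = 1} ((Real.sqrt (θ ⬝ᵥ θ))⁻¹ • θ) := by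
  have hLφ : ∀ φ, L φ = (√((2 * π) ^ d))⁻¹ * gaussianLogLik (toLp 2 φ) ⟪toLp 2 φ, toLp 2 θ⟫ := by
    intro φ
    rw [hL, integral_mul_gaussDensity_one (fun t => log (logistic t)),
      integral_mul_gaussDensity_one (fun t => log (1 - logistic t))]
    simp_rw [dotProduct_neg, ← sub_eq_add_neg]
    rw [integral_log_one_sub_logistic_inner_sub_mul_gaussian, inner_toLp_toLp_eq_dotProduct,
      gaussianLogLik]
    ring
  have hθ' : toLp 2 θ ≠ 0 := fun h => hθ (by simpa using congrArg ofLp h)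
  have hstar : toLp 2 ((√(θ ⬝ᵥ θ))⁻¹ • θ) = ‖toLp 2 θ‖⁻¹ • toLp 2 θ := by
    rw [toLp_smul, norm_toLp_eq_sqrt_dotProduct]
  intro φ (hφ : φ ⬝ᵥ φ = 1)
  have hφ' : toLp 2 φ ∈ sphere 0 1 := by
    rw [mem_sphere_zero_iff_norm, norm_toLp_eq_sqrt_dotProduct, hφ, sqrt_one]
  show L φ ≤ L _
  rw [hLφ, hLφ, hstar]
  exact mul_le_mul_of_nonneg_left (isMaxOn_gaussianLogLik_inner hθ' hφ') (by positivity)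
end

section
/- Let θ_t, θ_f ∈ ℝ^d be linearly independent unit vectors with θ_tᵀθ_f = ε ∈ (0,1). Consider four points μ_{s,u} = s·θ_t + u·θ_f for s, u ∈ {+1,-1}, with points labeled by the sign of s. Then the maximum-margin separating hyperplane through the origin has normal vector proportional to θ_t - ε θ_f (the component of θ_t orthogonal to θ_f, rescaled), which is not proportional to θ_t; whereas the difference between the mean of the positively labeled points and the mean of the negatively labeled points equals 2θ_t. -/
open Matrix

/-!
Write `v = θt - ε θf`, the component of `θt` orthogonal to `θf`, and `s = √(v ⬝ᵥ v) = √(1 - ε²)`.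
By the symmetry of the four points the margin of `φ` is `φ ⬝ᵥ θt - |φ ⬝ᵥ θf|`, which is at most
`φ ⬝ᵥ v` because `0 ≤ ε ≤ 1`; by Cauchy–Schwarz this is at most `s` on the unit sphere, with
equality only at `v / s`. Since `v / s` is orthogonal to `θf`, its margin is exactly `s`.
Dotting with `θf` shows it is not a multiple of `θt` once `ε ≠ 0`.
-/

variable {ι : Type*} [Fintype ι]

lemma dotProduct_self_nonneg {R : Type*} [Ring R] [LinearOrder R] [IsStrictOrderedRing R]
    (v : ι → R) : 0 ≤ v ⬝ᵥ v :=
  Finset.sum_nonneg fun i _ => mul_self_nonneg (v i)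

lemma dotProduct_self_pos {R : Type*} [Ring R] [LinearOrder R] [IsStrictOrderedRing R]
    {v : ι → R} (hv : v ≠ 0) : 0 < v ⬝ᵥ v :=
  (dotProduct_self_nonneg v).lt_of_ne' (mt dotProduct_self_eq_zero.mp hv)

lemma sq_sqrt_dotProduct_self (v : ι → ℝ) : √(v ⬝ᵥ v) ^ 2 = v ⬝ᵥ v :=
  Real.sq_sqrt (dotProduct_self_nonneg v)

lemma dotProduct_self_sqrt_smul_sub {φ : ι → ℝ} (v : ι → ℝ) (hφ : φ ⬝ᵥ φ = 1) :
    (√(v ⬝ᵥ v) • φ - v) ⬝ᵥ (√(v ⬝ᵥ v) • φ - v) = 2 * √(v ⬝ᵥ v) * (√(v ⬝ᵥ v) - φ ⬝ᵥ v) := by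
  have hs := sq_sqrt_dotProduct_self v
  simp only [sub_dotProduct, dotProduct_sub, smul_dotProduct, dotProduct_smul, smul_eq_mul, hφ,
    dotProduct_comm v φ] at *
  linear_combination -hs

lemma dotProduct_le_sqrt_dotProduct_self {φ : ι → ℝ} (v : ι → ℝ) (hφ : φ ⬝ᵥ φ = 1) :
    φ ⬝ᵥ v ≤ √(v ⬝ᵥ v) := by
  rcases eq_or_ne v 0 with rfl | hv
  · simp
  have hs : 0 < √(v ⬝ᵥ v) := Real.sqrt_pos.mpr (dotProduct_self_pos hv)
  have := dotProduct_self_nonneg (√(v ⬝ᵥ v) • φ - v)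
  rw [dotProduct_self_sqrt_smul_sub v hφ] at this
  nlinarith

lemma eq_inv_sqrt_smul_of_dotProduct_eq {φ v : ι → ℝ} (hv : v ≠ 0) (hφ : φ ⬝ᵥ φ = 1)
    (h : φ ⬝ᵥ v = √(v ⬝ᵥ v)) : φ = (√(v ⬝ᵥ v))⁻¹ • v := by
  have hs : √(v ⬝ᵥ v) ≠ 0 := (Real.sqrt_pos.mpr (dotProduct_self_pos hv)).ne'
  have h0 := dotProduct_self_sqrt_smul_sub v hφ
  rw [h, sub_self, mul_zero, dotProduct_self_eq_zero, sub_eq_zero] at h0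
  calc φ = (√(v ⬝ᵥ v))⁻¹ • (√(v ⬝ᵥ v) • φ) := by rw [smul_smul, inv_mul_cancel₀ hs, one_smul]
    _ = (√(v ⬝ᵥ v))⁻¹ • v := congrArg _ h0

lemma dotProduct_self_inv_sqrt_smul {v : ι → ℝ} (hv : v ≠ 0) :
    ((√(v ⬝ᵥ v))⁻¹ • v) ⬝ᵥ ((√(v ⬝ᵥ v))⁻¹ • v) = 1 := by
  have hpos := dotProduct_self_pos hv
  rw [smul_dotProduct, dotProduct_smul, smul_eq_mul, smul_eq_mul, ← mul_assoc, ← sq,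
    inv_pow, sq_sqrt_dotProduct_self, inv_mul_cancel₀ hpos.ne']

lemma inv_sqrt_smul_dotProduct_self {v : ι → ℝ} (hv : v ≠ 0) :
    ((√(v ⬝ᵥ v))⁻¹ • v) ⬝ᵥ v = √(v ⬝ᵥ v) := by
  rw [smul_dotProduct, smul_eq_mul, inv_mul_eq_div,
    div_eq_iff (Real.sqrt_pos.mpr (dotProduct_self_pos hv)).ne',
    Real.mul_self_sqrt (dotProduct_self_nonneg v)]

lemma isMaxOn_inv_sqrt_smul_of_le_dotProduct {M : (ι → ℝ) → ℝ} {v : ι → ℝ} (hv : v ≠ 0)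
    (hM : ∀ φ, M φ ≤ φ ⬝ᵥ v) (hMv : M ((√(v ⬝ᵥ v))⁻¹ • v) = √(v ⬝ᵥ v)) :
    IsMaxOn M {φ | φ ⬝ᵥ φ = 1} ((√(v ⬝ᵥ v))⁻¹ • v) ∧
      ∀ φ ∈ {φ : ι → ℝ | φ ⬝ᵥ φ = 1}, IsMaxOn M {φ | φ ⬝ᵥ φ = 1} φ →
        φ = (√(v ⬝ᵥ v))⁻¹ • v := by
  refine ⟨fun φ hφ => ((hM φ).trans (dotProduct_le_sqrt_dotProduct_self v hφ)).trans_eq hMv.symm,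
    fun φ hφ hmax => eq_inv_sqrt_smul_of_dotProduct_eq hv hφ
      (le_antisymm (dotProduct_le_sqrt_dotProduct_self v hφ) ?_)⟩
  calc √(v ⬝ᵥ v) = M ((√(v ⬝ᵥ v))⁻¹ • v) := hMv.symm
    _ ≤ M φ := hmax (dotProduct_self_inv_sqrt_smul hv)
    _ ≤ φ ⬝ᵥ v := hM φ

lemma not_exists_eq_smul_of_dotProduct_eq_zero {u x y : ι → ℝ} (hu : u ≠ 0)
    (huy : u ⬝ᵥ y = 0) (hxy : x ⬝ᵥ y ≠ 0) : ¬ ∃ c : ℝ, u = c • x := by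
  rintro ⟨c, rfl⟩
  rw [smul_dotProduct, smul_eq_mul, mul_eq_zero] at huy
  exact hu (by rw [huy.resolve_right hxy, zero_smul])

lemma min_add_sub_eq_sub_abs {α : Type*} [AddCommGroup α] [LinearOrder α]
    [IsOrderedAddMonoid α] (a b : α) : min (a + b) (a - b) = a - |b| := by
  rw [abs_eq_max_neg, ← min_sub_sub_left, sub_neg_eq_add, min_comm]

lemma sub_abs_le_sub_mul {a b ε : ℝ} (hε : ε ∈ Set.Icc (0 : ℝ) 1) : a - |b| ≤ a - ε * b := by
  have : ε * b ≤ |b| := by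
    calc ε * b ≤ |ε * b| := le_abs_self _
      _ = ε * |b| := by rw [abs_mul, abs_of_nonneg hε.1]
      _ ≤ |b| := mul_le_of_le_one_left (abs_nonneg b) hε.2
  linarith

lemma min_min_dotProduct_neg_eq_sub_abs (φ x y : ι → ℝ) :
    min (min (φ ⬝ᵥ (x + y)) (φ ⬝ᵥ (x - y))) (min (-(φ ⬝ᵥ (-x + y))) (-(φ ⬝ᵥ (-x - y)))) =
      φ ⬝ᵥ x - |φ ⬝ᵥ y| := by
  rw [← min_add_sub_eq_sub_abs]
  simp only [dotProduct_add, dotProduct_sub, dotProduct_neg]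
  rw [neg_add_eq_sub, neg_sub, show ∀ a b : ℝ, -(-a - b) = a + b by intros; ring,
    min_comm (_ - _), min_self]

lemma sub_smul_dotProduct_right {x y : ι → ℝ} {ε : ℝ} (hy : y ⬝ᵥ y = 1)
    (hxy : x ⬝ᵥ y = ε) : (x - ε • y) ⬝ᵥ y = 0 := by
  rw [sub_dotProduct, smul_dotProduct, hy, hxy, smul_eq_mul, mul_one, sub_self]

lemma sub_smul_dotProduct_self {x y : ι → ℝ} {ε : ℝ} (hx : x ⬝ᵥ x = 1)
    (hy : y ⬝ᵥ y = 1) (hxy : x ⬝ᵥ y = ε) :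
    (x - ε • y) ⬝ᵥ (x - ε • y) = 1 - ε ^ 2 := by
  rw [dotProduct_sub, dotProduct_smul, sub_smul_dotProduct_right hy hxy, sub_dotProduct,
    smul_dotProduct, dotProduct_comm y x, hx, hxy]
  simp only [smul_eq_mul]
  ring

theorem max_margin_vs_diff_in_means_general {d : ℕ} (θt θf : Fin d → ℝ) (ε : ℝ)
    (hε : ε ∈ Set.Ioo (0 : ℝ) 1)
    (hθt : θt ⬝ᵥ θt = 1) (hθf : θf ⬝ᵥ θf = 1) (hdot : θt ⬝ᵥ θf = ε)
    (M : (Fin d → ℝ) → ℝ)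
    (hM : ∀ φ, M φ = min (min (φ ⬝ᵥ (θt + θf)) (φ ⬝ᵥ (θt - θf)))
        (min (-(φ ⬝ᵥ (-θt + θf))) (-(φ ⬝ᵥ (-θt - θf))))) :
    IsMaxOn M {φ | φ ⬝ᵥ φ = 1}
      ((Real.sqrt ((θt - ε • θf) ⬝ᵥ (θt - ε • θf)))⁻¹ • (θt - ε • θf))
    ∧ (∀ φ ∈ {φ : Fin d → ℝ | φ ⬝ᵥ φ = 1}, IsMaxOn M {φ | φ ⬝ᵥ φ = 1} φ →
        φ = (Real.sqrt ((θt - ε • θf) ⬝ᵥ (θt - ε • θf)))⁻¹ • (θt - ε • θf))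
    ∧ (¬ ∃ c : ℝ,
        (Real.sqrt ((θt - ε • θf) ⬝ᵥ (θt - ε • θf)))⁻¹ • (θt - ε • θf) = c • θt)
    ∧ ((1/2 : ℝ) • ((θt + θf) + (θt - θf)) - (1/2 : ℝ) • ((-θt + θf) + (-θt - θf))
        = (2 : ℝ) • θt) := by
  set v := θt - ε • θf
  have hvf : v ⬝ᵥ θf = 0 := sub_smul_dotProduct_right hθf hdot
  have hv : v ≠ 0 := by
    intro hv0
    have hvv : v ⬝ᵥ v = 1 - ε ^ 2 := sub_smul_dotProduct_self hθt hθf hdot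
    rw [hv0, dotProduct_zero] at hvv
    nlinarith [hε.1, hε.2]
  have hMφ (φ : Fin d → ℝ) : M φ = φ ⬝ᵥ θt - |φ ⬝ᵥ θf| :=
    (hM φ).trans (min_min_dotProduct_neg_eq_sub_abs φ θt θf)
  have hM_le (φ : Fin d → ℝ) : M φ ≤ φ ⬝ᵥ v := by
    rw [hMφ, dotProduct_sub, dotProduct_smul, smul_eq_mul]
    exact sub_abs_le_sub_mul (Set.Ioo_subset_Icc_self hε)
  set u := (√(v ⬝ᵥ v))⁻¹ • v
  have huf : u ⬝ᵥ θf = 0 := by rw [smul_dotProduct, hvf, smul_zero]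
  have hMu : M u = √(v ⬝ᵥ v) := by
    rw [hMφ, huf, abs_zero, sub_zero, ← inv_sqrt_smul_dotProduct_self hv, dotProduct_sub,
      dotProduct_smul, huf, smul_zero, sub_zero]
  have hu : u ≠ 0 := by
    intro hu0
    have huu : u ⬝ᵥ u = 1 := dotProduct_self_inv_sqrt_smul hv
    simp [hu0] at huu
  obtain ⟨hmax, hunique⟩ := isMaxOn_inv_sqrt_smul_of_le_dotProduct hv hM_le hMu
  exact ⟨hmax, hunique,
    not_exists_eq_smul_of_dotProduct_eq_zero hu huf (hdot ▸ hε.1.ne'), by module⟩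

/-- In the four-point configuration `μ_{s,u} = s θ_t + u θ_f` labeled by the sign of `s`, the
maximum-margin unit normal through the origin is the normalization of `θ_t - ε θ_f`, which is
not proportional to `θ_t`, whereas the difference in class means equals `2θ_t`. -/
theorem max_margin_vs_diff_in_means {d : ℕ} (θt θf : Fin d → ℝ) (ε : ℝ)
    (hε : ε ∈ Set.Ioo (0 : ℝ) 1)
    (hlin : LinearIndependent ℝ ![θt, θf])
    (hθt : θt ⬝ᵥ θt = 1) (hθf : θf ⬝ᵥ θf = 1) (hdot : θt ⬝ᵥ θf = ε)
    (M : (Fin d → ℝ) → ℝ)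
    (hM : ∀ φ, M φ = min (min (φ ⬝ᵥ (θt + θf)) (φ ⬝ᵥ (θt - θf)))
        (min (-(φ ⬝ᵥ (-θt + θf))) (-(φ ⬝ᵥ (-θt - θf))))) :
    IsMaxOn M {φ | φ ⬝ᵥ φ = 1}
      ((Real.sqrt ((θt - ε • θf) ⬝ᵥ (θt - ε • θf)))⁻¹ • (θt - ε • θf))
    ∧ (∀ φ ∈ {φ : Fin d → ℝ | φ ⬝ᵥ φ = 1}, IsMaxOn M {φ | φ ⬝ᵥ φ = 1} φ →
        φ = (Real.sqrt ((θt - ε • θf) ⬝ᵥ (θt - ε • θf)))⁻¹ • (θt - ε • θf))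
    ∧ (¬ ∃ c : ℝ,
        (Real.sqrt ((θt - ε • θf) ⬝ᵥ (θt - ε • θf)))⁻¹ • (θt - ε • θf) = c • θt)
    ∧ ((1/2 : ℝ) • ((θt + θf) + (θt - θf)) - (1/2 : ℝ) • ((-θt + θf) + (-θt - θf))
        = (2 : ℝ) • θt) :=
  max_margin_vs_diff_in_means_general θt θf ε hε hθt hθf hdot M hM
end
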